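/- Let ν be a monotone valuation over the items of an enumeration P = (v₁,…,v_m) with m ≥ 1. Then (a) there exists at least one index r such that v_r is a lumpy tie for ν, and (b) the set of indices r for which v_r is a lumpy tie is a set of consecutive integers: if v_r and v_s are lumpy ties with r < q < s, then v_q is also a lumpy tie. -/

import Mathlib

/-!
Put `a r = ν {v₁, …, v_r}` and `b r = ν {v_{r+1}, …, v_m}`. Since `L(v_r) ∪ {v_r} = {v₁, …, v_r}`
and `R(v_r) ∪ {v_r} = {v_r, …, v_m}`, the item `v_r` is a lumpy tie exactly when `a` and `b`
cross between `r - 1` and `r`: `a (r - 1) ≤ b (r - 1)` and `b r ≤ a r`. By monotonicity of `ν`,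
`a` is nondecreasing, `b` is nonincreasing, `a 0 ≤ b 0` and `b m ≤ a m`; a discrete
intermediate value argument gives a crossing, and the crossings form an interval.
-/

/-- The bundle `{v s, …, v t}` of items (empty if `s > t`). -/
def segF {V : Type} [DecidableEq V] (v : ℕ → V) (s t : ℕ) : Finset V :=
  (Finset.Icc s t).image v

/-- `v r` is a lumpy tie over the enumeration `v 1, …, v m` for the valuation `ν`:
`ν(L(v_r) ∪ {v_r}) ≥ ν(R(v_r))` and `ν(R(v_r) ∪ {v_r}) ≥ ν(L(v_r))`. -/
def IsLumpyTie {V : Type} [DecidableEq V] (v : ℕ → V) (m : ℕ) (ν : Finset V → ℝ)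
    (r : ℕ) : Prop :=
  ν (segF v 1 (r - 1) ∪ {v r}) ≥ ν (segF v (r + 1) m) ∧
  ν (segF v (r + 1) m ∪ {v r}) ≥ ν (segF v 1 (r - 1))

section Crossing

variable {α : Type*} [LinearOrder α] {a b : ℕ → α}

def IsCrossing (a b : ℕ → α) (r : ℕ) : Prop :=
  a (r - 1) ≤ b (r - 1) ∧ b r ≤ a r

theorem exists_isCrossing {m : ℕ} (hm : 1 ≤ m) (h0 : a 0 ≤ b 0) (hm' : b m ≤ a m) :
    ∃ r, 1 ≤ r ∧ r ≤ m ∧ IsCrossing a b r := by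
  induction m, hm using Nat.le_induction with
  | base => exact ⟨1, le_rfl, le_rfl, h0, hm'⟩
  | succ n hn ih =>
    by_cases hbn : b n ≤ a n
    · obtain ⟨r, h1, hrn, hr⟩ := ih hbn
      exact ⟨r, h1, hrn.trans n.le_succ, hr⟩
    · exact ⟨n + 1, by omega, le_rfl, (not_le.mp hbn).le, hm'⟩

theorem IsCrossing.of_le_of_le (ha : Monotone a) (hb : Antitone b) {r q s : ℕ}
    (hr : IsCrossing a b r) (hs : IsCrossing a b s) (hrq : r ≤ q) (hqs : q ≤ s) :
    IsCrossing a b q :=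
  ⟨(ha (Nat.sub_le_sub_right hqs 1)).trans (hs.1.trans (hb (Nat.sub_le_sub_right hqs 1))),
    (hb hrq).trans (hr.2.trans (ha hrq))⟩

end Crossing

section Segments

variable {V : Type} [DecidableEq V] (v : ℕ → V)

theorem segF_subset_segF {s t s' t' : ℕ} (hs : s' ≤ s) (ht : t ≤ t') :
    segF v s t ⊆ segF v s' t' :=
  Finset.image_subset_image (Finset.Icc_subset_Icc hs ht)

theorem segF_sub_one_union_singleton {r : ℕ} (hr : 1 ≤ r) :
    segF v 1 (r - 1) ∪ {v r} = segF v 1 r := by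
  rw [segF, segF, ← Finset.image_singleton, ← Finset.image_union]
  congr 1
  ext x
  simp only [Finset.mem_union, Finset.mem_Icc, Finset.mem_singleton]
  omega

theorem segF_succ_union_singleton {r m : ℕ} (hr : r ≤ m) :
    segF v (r + 1) m ∪ {v r} = segF v r m := by
  rw [segF, segF, ← Finset.image_singleton, ← Finset.image_union]
  congr 1
  ext x
  simp only [Finset.mem_union, Finset.mem_Icc, Finset.mem_singleton]
  omega

theorem isLumpyTie_iff_isCrossing {m : ℕ} (ν : Finset V → ℝ) {r : ℕ} (h1 : 1 ≤ r)
    (hr : r ≤ m) :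
    IsLumpyTie v m ν r ↔
      IsCrossing (fun t ↦ ν (segF v 1 t)) (fun t ↦ ν (segF v (t + 1) m)) r := by
  rw [IsLumpyTie, IsCrossing, segF_sub_one_union_singleton v h1,
    segF_succ_union_singleton v hr, Nat.sub_add_cancel h1, and_comm]

end Segments

theorem stmt_12_general {V : Type} [DecidableEq V] (m : ℕ) (hm : 1 ≤ m)
    (v : ℕ → V) (ν : Finset V → ℝ)
    (hmono : ∀ X Y : Finset V, X ⊆ Y → ν X ≤ ν Y) :
    (∃ r, 1 ≤ r ∧ r ≤ m ∧ IsLumpyTie v m ν r) ∧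
    (∀ r q s : ℕ, 1 ≤ r → r < q → q < s → s ≤ m →
      IsLumpyTie v m ν r → IsLumpyTie v m ν s → IsLumpyTie v m ν q) := by
  have hν : Monotone ν := fun X Y h ↦ hmono X Y h
  have ha : Monotone fun t ↦ ν (segF v 1 t) :=
    fun _ _ h ↦ hν (segF_subset_segF v le_rfl h)
  have hb : Antitone fun t ↦ ν (segF v (t + 1) m) :=
    fun _ _ h ↦ hν (segF_subset_segF v (by omega) le_rfl)
  constructor
  · obtain ⟨r, h1, hrm, hr⟩ := exists_isCrossing (a := fun t ↦ ν (segF v 1 t))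
      (b := fun t ↦ ν (segF v (t + 1) m)) hm
      (hν (segF_subset_segF v le_rfl (Nat.zero_le m)))
      (hν (segF_subset_segF v (by omega) le_rfl))
    exact ⟨r, h1, hrm, (isLumpyTie_iff_isCrossing v ν h1 hrm).2 hr⟩
  · intro r q s h1 hrq hqs hsm hr hs
    rw [isLumpyTie_iff_isCrossing v ν h1 (by omega)] at hr
    rw [isLumpyTie_iff_isCrossing v ν (by omega) hsm] at hs
    exact (isLumpyTie_iff_isCrossing v ν (by omega) (by omega)).2
      (hr.of_le_of_le ha hb hs hrq.le hqs.le)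

/-- For a monotone valuation over an enumeration `v 1, …, v m` of `m ≥ 1` distinct items:
(a) a lumpy tie exists, and (b) the lumpy-tie indices are consecutive. -/
theorem stmt_12 {V : Type} [DecidableEq V] (m : ℕ) (hm : 1 ≤ m)
    (v : ℕ → V) (hv : Set.InjOn v (Set.Icc 1 m))
    (ν : Finset V → ℝ) (hν0 : ν ∅ = 0)
    (hmono : ∀ X Y : Finset V, X ⊆ Y → ν X ≤ ν Y) :
    (∃ r, 1 ≤ r ∧ r ≤ m ∧ IsLumpyTie v m ν r) ∧
    (∀ r q s : ℕ, 1 ≤ r → r < q → q < s → s ≤ m →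
      IsLumpyTie v m ν r → IsLumpyTie v m ν s → IsLumpyTie v m ν q) :=
  stmt_12_general m hm v ν hmono
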